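/- arXiv:1909.11982 — 4 statements merged into one kernel-verified Lean document; each statement's English description precedes it below -/
import Mathlib

section
/- For any bipartite graph G with bipartition (X,Y) where |X| = r, |Y| = s and r ≤ s, the product of minimum degrees satisfies δ(G)·δ(G^{bc}) ≤ ⌈r/2⌉·⌊r/2⌋. -/
/-!
Pick any `y ∈ Y`. Since `G` is bipartite, every neighbour of `y` in `G` or in `G^{bc}` lies in `X`,
and each `x ∈ X` is a neighbour of `y` in exactly one of the two graphs, so
`deg_G y + deg_{G^{bc}} y = r`. Hence `δ(G) δ(G^{bc}) ≤ deg_G y · deg_{G^{bc}} y ≤ ⌈r/2⌉ ⌊r/2⌋`.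
If `Y` is empty, `G^{bc}` has no edges and the product vanishes.
-/

open SimpleGraph Sum

noncomputable def minDeg {V : Type*} [Fintype V] (G : SimpleGraph V) : ℕ :=
  @SimpleGraph.minDegree V G _ (Classical.decRel _)

/-- Edge-connectivity: minimum size of an edge set whose deletion disconnects
the graph (0 if the graph is disconnected or cannot be disconnected). -/
noncomputable def edgeConn {V : Type*} [Fintype V] (G : SimpleGraph V) : ℕ :=
  sInf {n | ∃ F : Finset (Sym2 V), F.card = n ∧ ↑F ⊆ G.edgeSet ∧
    ¬ (G.deleteEdges ↑F).Connected}

/-- Vertex-connectivity: minimum size of a vertex set whose removal leaves a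
graph which is disconnected or has only one vertex. -/
noncomputable def vertConn {V : Type*} [Fintype V] (G : SimpleGraph V) : ℕ :=
  sInf {n | ∃ S : Finset V, S.card = n ∧
    (¬ (G.induce ((↑S : Set V)ᶜ)).Connected ∨ Nat.card (((↑S : Set V)ᶜ : Set V)) = 1)}

/-- `G` on `X ⊕ Y` is bipartite with parts `X` and `Y`. -/
def IsBipartition {X Y : Type*} (G : SimpleGraph (X ⊕ Y)) : Prop :=
  ∀ a b, G.Adj a b → (a.isLeft ∧ b.isRight) ∨ (a.isRight ∧ b.isLeft)

/-- Bipartite complement with respect to the bipartition `(X, Y)`. -/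
def bipCompl {X Y : Type*} (G : SimpleGraph (X ⊕ Y)) : SimpleGraph (X ⊕ Y) where
  Adj a b := ((a.isLeft ∧ b.isRight) ∨ (a.isRight ∧ b.isLeft)) ∧ ¬ G.Adj a b
  symm := ⟨fun a b h => ⟨h.1.symm.imp And.symm And.symm, fun h' => h.2 h'.symm⟩⟩
  loopless := ⟨fun a h => by rcases h.1 with ⟨h1, h2⟩ | ⟨h1, h2⟩ <;> cases a <;> simp_all⟩

open Finset

theorem Nat.mul_le_add_add_one_div_two_mul_add_div_two (a b : ℕ) :
    a * b ≤ (a + b + 1) / 2 * ((a + b) / 2) := by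
  wlog hab : a ≤ b generalizing a b
  · simpa only [Nat.add_comm a b, Nat.mul_comm a b] using this b a (by omega)
  obtain ⟨d, rfl⟩ := Nat.exists_eq_add_of_le hab
  have hceil : (a + (a + d) + 1) / 2 = a + (d + 1) / 2 := by omega
  have hfloor : (a + (a + d)) / 2 = a + d / 2 := by omega
  have hd : (d + 1) / 2 + d / 2 = d := by omega
  rw [hceil, hfloor]
  nlinarith [Nat.zero_le ((d + 1) / 2 * (d / 2))]

theorem minDeg_eq_minDegree {V : Type*} [Fintype V] (G : SimpleGraph V) [DecidableRel G.Adj] :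
    minDeg G = G.minDegree := by
  unfold minDeg
  congr

section BipartiteComplement

variable {X Y : Type*}

theorem bipCompl_eq_bot_of_isEmpty (G : SimpleGraph (X ⊕ Y)) [IsEmpty Y] : bipCompl G = ⊥ := by
  ext a b
  rcases a with x | y
  · rcases b with x' | y
    · simp [bipCompl]
    · exact isEmptyElim y
  · exact isEmptyElim y

variable [Fintype X] [Fintype Y] {G : SimpleGraph (X ⊕ Y)} [DecidableRel G.Adj]
  [DecidableRel (bipCompl G).Adj]

theorem disjoint_neighborFinset_bipCompl (v : X ⊕ Y) :
    Disjoint (G.neighborFinset v) ((bipCompl G).neighborFinset v) :=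
  disjoint_left.2 fun _ hG hGbc =>
    ((mem_neighborFinset _ _ _).1 hGbc).2 ((mem_neighborFinset _ _ _).1 hG)

theorem degree_add_degree_bipCompl (hG : IsBipartition G) (y : Y) :
    G.degree (inr y) + (bipCompl G).degree (inr y) = Fintype.card X := by
  classical
  have hunion : G.neighborFinset (inr y) ∪ (bipCompl G).neighborFinset (inr y) =
      univ.map .inl := by
    ext w
    rw [mem_union, mem_neighborFinset, mem_neighborFinset]
    cases w with
    | inl x => simp [bipCompl, em]
    | inr y' =>
      have : ¬G.Adj (inr y) (inr y') := fun h => by simpa using hG _ _ h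
      simp [bipCompl, this]
  rw [← card_neighborFinset_eq_degree, ← card_neighborFinset_eq_degree,
    ← card_union_of_disjoint (disjoint_neighborFinset_bipCompl _), hunion, card_map, card_univ]

end BipartiteComplement

theorem minDeg_prod_bound_general {X Y : Type*} [Fintype X] [Fintype Y] {r : ℕ}
    (G : SimpleGraph (X ⊕ Y)) (hbip : IsBipartition G)
    (hr : Fintype.card X = r) :
    minDeg G * minDeg (bipCompl G) ≤ ((r + 1) / 2) * (r / 2) := by
  classical
  rcases isEmpty_or_nonempty Y with hY | ⟨⟨y⟩⟩
  · simp [bipCompl_eq_bot_of_isEmpty, minDeg_eq_minDegree]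
  calc minDeg G * minDeg (bipCompl G)
      ≤ G.degree (inr y) * (bipCompl G).degree (inr y) := by
        rw [minDeg_eq_minDegree, minDeg_eq_minDegree]
        exact Nat.mul_le_mul (minDegree_le_degree _ _) (minDegree_le_degree _ _)
    _ ≤ (r + 1) / 2 * (r / 2) := by
        simpa only [degree_add_degree_bipCompl hbip, hr] using
          Nat.mul_le_add_add_one_div_two_mul_add_div_two (G.degree (inr y))
            ((bipCompl G).degree (inr y))

theorem minDeg_prod_bound {X Y : Type*} [Fintype X] [Fintype Y] {r s : ℕ}
    (G : SimpleGraph (X ⊕ Y)) (hbip : IsBipartition G)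
    (hr : Fintype.card X = r) (hs : Fintype.card Y = s) (hrs : r ≤ s) :
    minDeg G * minDeg (bipCompl G) ≤ ((r + 1) / 2) * (r / 2) :=
  minDeg_prod_bound_general G hbip hr
end

section
/- For any bipartite graph G with bipartition (X,Y) where |X| = r, |Y| = s and r ≤ s, the edge-connectivities satisfy κ'(G) + κ'(G^{bc}) ≤ r. -/
open SimpleGraph Sum

/-
Every vertex `y ∈ Y` is adjacent, in exactly one of `G` and `G^{bc}`, to each vertex of `X`, so
`deg_G y + deg_{G^{bc}} y = r`; and the edge-connectivity of a graph is at most the degree of any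
of its vertices, since deleting the edges at a vertex isolates it. Such a `y` exists unless
`s = 0`, in which case `r = 0` as well and both graphs have no vertices.
-/

namespace SimpleGraph

variable {V : Type*} {H : SimpleGraph V}

lemma edgeConn_eq_zero_of_not_connected [Fintype V] (h : ¬ H.Connected) : edgeConn H = 0 :=
  Nat.sInf_eq_zero.2 <|
    .inl ⟨∅, Finset.card_empty, by simp, by rwa [Finset.coe_empty, deleteEdges_empty]⟩

lemma edgeConn_eq_zero_of_subsingleton [Fintype V] [Subsingleton V] : edgeConn H = 0 := by
  cases isEmpty_or_nonempty V with
  | inl _ => exact edgeConn_eq_zero_of_not_connected fun h => not_nonempty_iff.2 ‹_› h.nonempty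
  | inr _ =>
    refine Nat.sInf_eq_zero.2 <| .inr <| Set.eq_empty_of_forall_notMem ?_
    rintro n ⟨F, -, -, hF⟩
    exact hF ⟨Preconnected.of_subsingleton⟩

lemma not_connected_deleteEdges_incidenceSet [Nontrivial V] (v : V) :
    ¬ (H.deleteEdges (H.incidenceSet v)).Connected := by
  obtain ⟨w, hwv⟩ := exists_ne v
  intro hconn
  obtain ⟨p⟩ := hconn v w
  cases p with
  | nil => exact hwv rfl
  | cons hadj _ =>
    rw [deleteEdges_adj] at hadj
    exact hadj.2 (H.mk'_mem_incidenceSet_left_iff.2 hadj.1)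

lemma edgeConn_le_degree [Fintype V] [DecidableRel H.Adj] (v : V) : edgeConn H ≤ H.degree v := by
  classical
  cases subsingleton_or_nontrivial V with
  | inl _ => exact edgeConn_eq_zero_of_subsingleton.trans_le (Nat.zero_le _)
  | inr _ =>
    refine Nat.sInf_le ⟨H.incidenceFinset v, H.card_incidenceFinset_eq_degree v, ?_, ?_⟩
    · simpa using H.incidenceSet_subset v
    · simpa using H.not_connected_deleteEdges_incidenceSet v

end SimpleGraph

open SimpleGraph

lemma neighborFinset_bipCompl_inr {X Y : Type*} [Fintype X] [Fintype Y] [DecidableEq X]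
    [DecidableEq Y] (G : SimpleGraph (X ⊕ Y)) [DecidableRel G.Adj]
    [DecidableRel (bipCompl G).Adj] (y : Y) :
    (bipCompl G).neighborFinset (inr y) = Finset.univ.map .inl \ G.neighborFinset (inr y) := by
  ext (x | y') <;> simp only [mem_neighborFinset, Finset.mem_sdiff] <;> simp [bipCompl]

lemma IsBipartition.neighborFinset_inr_subset {X Y : Type*} [Fintype X] [Fintype Y]
    [DecidableEq X] [DecidableEq Y] {G : SimpleGraph (X ⊕ Y)} [DecidableRel G.Adj]
    (hbip : IsBipartition G) (y : Y) :
    G.neighborFinset (inr y) ⊆ Finset.univ.map .inl := by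
  intro a ha
  rw [mem_neighborFinset] at ha
  rcases hbip _ _ ha with ⟨h, -⟩ | ⟨-, h⟩ <;> cases a <;> simp_all

lemma degree_add_degree_bipCompl_inr {X Y : Type*} [Fintype X] [Fintype Y]
    (G : SimpleGraph (X ⊕ Y)) [DecidableRel G.Adj] [DecidableRel (bipCompl G).Adj]
    (hbip : IsBipartition G) (y : Y) :
    G.degree (inr y) + (bipCompl G).degree (inr y) = Fintype.card X := by
  classical
  rw [← card_neighborFinset_eq_degree, ← card_neighborFinset_eq_degree,
    neighborFinset_bipCompl_inr G y, add_comm,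
    Finset.card_sdiff_add_card_eq_card (hbip.neighborFinset_inr_subset y), Finset.card_map,
    Finset.card_univ]

theorem edgeConn_sum_bound {X Y : Type*} [Fintype X] [Fintype Y] {r s : ℕ}
    (G : SimpleGraph (X ⊕ Y)) (hbip : IsBipartition G)
    (hr : Fintype.card X = r) (hs : Fintype.card Y = s) (hrs : r ≤ s) :
    edgeConn G + edgeConn (bipCompl G) ≤ r := by
  classical
  cases isEmpty_or_nonempty Y with
  | inl _ =>
    have : IsEmpty X := Fintype.card_eq_zero_iff.1 <| by
      have := Fintype.card_eq_zero (α := Y); omega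
    rw [edgeConn_eq_zero_of_subsingleton, edgeConn_eq_zero_of_subsingleton]
    exact Nat.zero_le r
  | inr hY =>
    obtain ⟨y⟩ := hY
    calc edgeConn G + edgeConn (bipCompl G)
        ≤ G.degree (inr y) + (bipCompl G).degree (inr y) :=
          add_le_add (edgeConn_le_degree _) (edgeConn_le_degree _)
      _ = r := hr ▸ degree_add_degree_bipCompl_inr G hbip y
end

section
/- Let G be a bipartite graph with bipartition (X,Y), |X| = r ≥ 2, |Y| = s, r ≤ s, and exactly m = r + s − 1 edges. Then κ'(G) + κ'(G^{bc}) ≤ r − 1. -/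
open SimpleGraph Sum

/-!
Since `m = n - 1 < n`, the handshake lemma gives a vertex of `G` of degree at most one, so
`κ'(G) ≤ 1`. Counting edges from the side `Y` gives `∑_{y ∈ Y} d_G(y) = m > s` (as `r ≥ 2`), so
some `y ∈ Y` has `d_G(y) ≥ 2`, whence `κ'(G^{bc}) ≤ d_{G^{bc}}(y) = r - d_G(y) ≤ r - 2`.
-/

section EdgeConn

variable {V : Type*} [Fintype V]

lemma edgeConn_le_degree [Nontrivial V] (H : SimpleGraph V) [DecidableRel H.Adj] (v : V) :
    edgeConn H ≤ H.degree v := by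
  classical
  apply Nat.sInf_le
  refine ⟨H.incidenceFinset v, H.card_incidenceFinset_eq_degree v, ?_, fun hconn => ?_⟩
  · rw [coe_incidenceFinset]
    exact H.incidenceSet_subset v
  · refine hconn.preconnected.not_isIsolated v fun w hw => ?_
    rw [deleteEdges_adj] at hw
    exact hw.2 ((H.mem_incidenceFinset v _).mpr ((H.mem_incidenceSet v w).mpr hw.1))

lemma exists_degree_le_one_of_card_edgeFinset_lt (H : SimpleGraph V) [DecidableRel H.Adj]
    (h : H.edgeFinset.card < Fintype.card V) : ∃ v, H.degree v ≤ 1 := by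
  have hsum : ∑ v, H.degree v < ∑ _v : V, 2 := by
    rw [sum_degrees_eq_twice_card_edges, Finset.sum_const, Finset.card_univ, smul_eq_mul]
    omega
  obtain ⟨v, -, hv⟩ := Finset.exists_lt_of_sum_lt hsum
  exact ⟨v, Nat.le_of_lt_succ hv⟩

end EdgeConn

namespace IsBipartition

variable {X Y : Type*} [Fintype X] [Fintype Y] {G : SimpleGraph (X ⊕ Y)}

lemma isBipartiteWith (hG : IsBipartition G) :
    G.IsBipartiteWith (Finset.univ.map .inl : Finset (X ⊕ Y))
      (Finset.univ.map .inr : Finset (X ⊕ Y)) where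
  disjoint := by
    rw [Finset.disjoint_coe, Finset.disjoint_left]
    simp
  mem_of_adj a b hab := by
    rcases hG a b hab with ⟨ha, hb⟩ | ⟨ha, hb⟩ <;> cases a <;> cases b <;> simp_all

lemma sum_degree_inr_eq_card_edgeFinset [DecidableRel G.Adj] (hG : IsBipartition G) :
    ∑ y, G.degree (inr y) = G.edgeFinset.card := by
  rw [← isBipartiteWith_sum_degrees_eq_card_edges' (isBipartiteWith hG), Finset.sum_map]
  rfl

lemma degree_bipCompl_inr [DecidableRel G.Adj] [DecidableRel (bipCompl G).Adj]
    (hG : IsBipartition G) (y : Y) :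
    (bipCompl G).degree (inr y) = Fintype.card X - G.degree (inr y) := by
  classical
  have hsub : G.neighborFinset (inr y) ⊆ Finset.univ.map .inl :=
    isBipartiteWith_neighborFinset_subset' (isBipartiteWith hG) (by simp)
  have hnbr : (bipCompl G).neighborFinset (inr y) =
      Finset.univ.map .inl \ G.neighborFinset (inr y) := by
    ext (x | y') <;> rw [Finset.mem_sdiff, mem_neighborFinset, mem_neighborFinset] <;>
      simp [bipCompl]
  rw [← card_neighborFinset_eq_degree, hnbr, Finset.card_sdiff_of_subset hsub,
    Finset.card_map, Finset.card_univ, card_neighborFinset_eq_degree]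

end IsBipartition

theorem edgeConn_sum_le_sub_one_tree_general {X Y : Type*} [Fintype X] [Fintype Y] {r s m : ℕ}
    (G : SimpleGraph (X ⊕ Y)) (hbip : IsBipartition G)
    (hr : Fintype.card X = r) (hs : Fintype.card Y = s) (hr2 : 2 ≤ r)
    (hm : G.edgeSet.ncard = m) (hm1 : m + 1 = r + s) :
    edgeConn G + edgeConn (bipCompl G) ≤ r - 1 := by
  classical
  have hcard : G.edgeFinset.card = m := by
    rw [← hm, ← coe_edgeFinset, Set.ncard_coe_finset]
  have : Nontrivial (X ⊕ Y) :=
    Fintype.one_lt_card_iff_nontrivial.mp (by rw [Fintype.card_sum]; omega)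
  have hG : edgeConn G ≤ 1 := by
    obtain ⟨v, hv⟩ := exists_degree_le_one_of_card_edgeFinset_lt G
      (by rw [Fintype.card_sum]; omega)
    exact (edgeConn_le_degree G v).trans hv
  obtain ⟨y, -, hy⟩ : ∃ y ∈ Finset.univ, 1 < G.degree (inr y) := by
    apply Finset.exists_lt_of_sum_lt
    rw [IsBipartition.sum_degree_inr_eq_card_edgeFinset hbip]
    simp only [Finset.sum_const, Finset.card_univ, smul_eq_mul]
    omega
  have hGbc : edgeConn (bipCompl G) ≤ r - 2 := by
    refine (edgeConn_le_degree _ (inr y)).trans ?_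
    rw [IsBipartition.degree_bipCompl_inr hbip, hr]
    omega
  omega

theorem edgeConn_sum_le_sub_one_tree {X Y : Type*} [Fintype X] [Fintype Y] {r s m : ℕ}
    (G : SimpleGraph (X ⊕ Y)) (hbip : IsBipartition G)
    (hr : Fintype.card X = r) (hs : Fintype.card Y = s) (hrs : r ≤ s) (hr2 : 2 ≤ r)
    (hm : G.edgeSet.ncard = m) (hm1 : m + 1 = r + s) :
    edgeConn G + edgeConn (bipCompl G) ≤ r - 1 :=
  edgeConn_sum_le_sub_one_tree_general G hbip hr hs hr2 hm hm1
end

section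
/- Let G be a bipartite graph with bipartition (X,Y), |X| = r ≤ s = |Y|, n = r + s vertices and m ≥ n edges with m not divisible by s. Then κ'(G) + κ'(G^{bc}) ≤ r − 1. -/
open SimpleGraph Sum

/-!
Pigeonhole on the degrees of the vertices of `Y`, which sum to `m`: writing `d = ⌊m / s⌋`,
some `y₁` has degree at most `d`, and since `s ∤ m` some `y₂` has degree at least `d + 1`.
Isolating a vertex bounds the edge-connectivity by its degree, so
`κ'(G) + κ'(Gᵇᶜ) ≤ deg_G y₁ + deg_{Gᵇᶜ} y₂ ≤ d + (r - d - 1)`.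
-/

open Finset

namespace SimpleGraph

variable {V : Type*}

lemma edgeConn_le_degree_s13 [Fintype V] [DecidableEq V] [Nontrivial V] (G : SimpleGraph V)
    [DecidableRel G.Adj] (v : V) : edgeConn G ≤ G.degree v := by
  obtain ⟨w, hwv⟩ := exists_ne v
  refine Nat.sInf_le ⟨G.incidenceFinset v, G.card_incidenceFinset_eq_degree v,
    fun e he => (mem_incidenceFinset G v e).1 he |>.1, fun hconn => ?_⟩
  -- every edge at `v` has been deleted, so no walk leaves `v`
  obtain ⟨p⟩ := hconn.preconnected v w
  cases p with
  | nil => exact hwv rfl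
  | cons h _ =>
    rw [deleteEdges_adj] at h
    exact h.2 ((mem_incidenceFinset G v _).2 ⟨h.1, Sym2.mem_mk_left _ _⟩)

end SimpleGraph

open SimpleGraph

section Bipartition

variable {X Y : Type*} {G : SimpleGraph (X ⊕ Y)}

lemma isBipartiteWith_of_isBipartition [Fintype X] [Fintype Y] (hG : IsBipartition G) :
    G.IsBipartiteWith (univ.map .inl : Finset (X ⊕ Y)) (univ.map .inr : Finset (X ⊕ Y)) where
  disjoint := by
    simp [Set.disjoint_left]
  mem_of_adj a b hab := by
    rcases hG a b hab with ⟨ha, hb⟩ | ⟨ha, hb⟩ <;> cases a <;> cases b <;> simp_all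

lemma isBipartition_bipCompl (G : SimpleGraph (X ⊕ Y)) : IsBipartition (bipCompl G) :=
  fun _ _ h => h.1

lemma sum_degree_inr_of_isBipartition [Fintype X] [Fintype Y] [DecidableRel G.Adj]
    (hG : IsBipartition G) :
    ∑ y : Y, G.degree (.inr y) = #G.edgeFinset := by
  rw [← isBipartiteWith_sum_degrees_eq_card_edges' (isBipartiteWith_of_isBipartition hG), sum_map]
  rfl

lemma degree_inr_add_degree_bipCompl_inr [Fintype X] [Fintype Y]
    [DecidableRel G.Adj] [DecidableRel (bipCompl G).Adj] (hG : IsBipartition G) (y : Y) :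
    G.degree (.inr y) + (bipCompl G).degree (.inr y) = Fintype.card X := by
  have hy : (.inr y : X ⊕ Y) ∈ (univ.map .inr : Finset (X ⊕ Y)) := by simp
  rw [← card_neighborFinset_eq_degree, ← card_neighborFinset_eq_degree,
    isBipartiteWith_neighborFinset' (isBipartiteWith_of_isBipartition hG) hy,
    isBipartiteWith_neighborFinset' (isBipartiteWith_of_isBipartition
      (isBipartition_bipCompl G)) hy,
    filter_congr (p := fun v => (bipCompl G).Adj v (.inr y))
      (q := fun v => ¬ G.Adj v (.inr y)) (by simp [bipCompl]),
    card_filter_add_card_filter_not, card_map, card_univ]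

end Bipartition

lemma exists_le_sum_div_card {ι : Type*} [Fintype ι] [Nonempty ι] (f : ι → ℕ) :
    ∃ i, f i ≤ (∑ j, f j) / Fintype.card ι := by
  have hlt : ∑ j, f j < ∑ _j : ι, ((∑ j, f j) / Fintype.card ι + 1) := by
    rw [sum_const, card_univ, smul_eq_mul]
    exact Nat.lt_mul_div_succ _ Fintype.card_pos
  obtain ⟨i, -, hi⟩ := exists_lt_of_sum_lt hlt
  exact ⟨i, Nat.lt_succ_iff.1 hi⟩

lemma exists_sum_div_card_lt_of_not_dvd {ι : Type*} [Fintype ι] (f : ι → ℕ)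
    (hf : ¬ Fintype.card ι ∣ ∑ j, f j) : ∃ i, (∑ j, f j) / Fintype.card ι < f i := by
  have hlt : ∑ _j : ι, (∑ j, f j) / Fintype.card ι < ∑ j, f j := by
    rw [sum_const, card_univ, smul_eq_mul]
    exact Nat.mul_div_lt_iff_not_dvd.2 hf
  obtain ⟨i, -, hi⟩ := exists_lt_of_sum_lt hlt
  exact ⟨i, hi⟩

theorem edgeConn_sum_le_sub_one_not_dvd_general {X Y : Type*} [Fintype X] [Fintype Y] {r s m : ℕ}
    (G : SimpleGraph (X ⊕ Y)) (hbip : IsBipartition G)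
    (hr : Fintype.card X = r) (hs : Fintype.card Y = s)
    (hm : G.edgeSet.ncard = m) (hm2 : ¬ s ∣ m) :
    edgeConn G + edgeConn (bipCompl G) ≤ r - 1 := by
  classical
  subst hr hs
  have hsum : ∑ y : Y, G.degree (.inr y) = m := by
    rw [sum_degree_inr_of_isBipartition hbip, ← hm, ← coe_edgeFinset, Set.ncard_coe_finset]
  obtain ⟨y₂, hy₂⟩ := exists_sum_div_card_lt_of_not_dvd _ (hsum ▸ hm2)
  have : Nonempty Y := ⟨y₂⟩
  obtain ⟨y₁, hy₁⟩ := exists_le_sum_div_card fun y : Y => G.degree (.inr y)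
  have hcompl := degree_inr_add_degree_bipCompl_inr hbip y₂
  have : Nonempty X := Fintype.card_pos_iff.1 (by omega)
  have : Nontrivial (X ⊕ Y) := ⟨⟨.inl (Classical.arbitrary X), .inr y₁, Sum.inl_ne_inr⟩⟩
  have h₁ := edgeConn_le_degree_s13 G (.inr y₁)
  have h₂ := edgeConn_le_degree_s13 (bipCompl G) (.inr y₂)
  omega

theorem edgeConn_sum_le_sub_one_not_dvd {X Y : Type*} [Fintype X] [Fintype Y] {r s m : ℕ}
    (G : SimpleGraph (X ⊕ Y)) (hbip : IsBipartition G)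
    (hr : Fintype.card X = r) (hs : Fintype.card Y = s) (hrs : r ≤ s)
    (hm : G.edgeSet.ncard = m) (hm1 : r + s ≤ m) (hm2 : ¬ s ∣ m) :
    edgeConn G + edgeConn (bipCompl G) ≤ r - 1 :=
  edgeConn_sum_le_sub_one_not_dvd_general G hbip hr hs hm hm2
end
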